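/- Let P_x and P_v = vvᵀ (with ‖v‖ ≤ 1) be orthogonal projections, set Q_v = I − P_v, a = P_x v, b = (I − P_x)v, α = ‖a‖², β = ‖b‖² with β > 0. Then β·[P_x + (I−P_x)vvᵀ(I−P_x)/β − (Q_v P_x Q_v + P_v)] ⪰ (αb − βa)(αb − βa)ᵀ ⪰ 0. -/

import Mathlib

open Matrix

private lemma my_mul_vmv {n : ℕ} (M : Matrix (Fin n) (Fin n) ℝ) (u w : Fin n → ℝ) :
    M * vecMulVec u w = vecMulVec (M *ᵥ u) w := by
  ext i j
  simp [mul_apply, vecMulVec_apply, mulVec, dotProduct, Finset.sum_mul, mul_assoc]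

private lemma my_vmv_mul {n : ℕ} (M : Matrix (Fin n) (Fin n) ℝ) (u w : Fin n → ℝ) :
    vecMulVec u w * M = vecMulVec u (Mᵀ *ᵥ w) := by
  ext i j
  simp [mul_apply, vecMulVec_apply, mulVec, dotProduct, Finset.mul_sum, transpose_apply]
  congr 1; ext k; ring

private lemma my_vmv_mulVec {n : ℕ} (u w x : Fin n → ℝ) :
    vecMulVec u w *ᵥ x = (w ⬝ᵥ x) • u := by
  ext i
  simp [vecMulVec_apply, mulVec, dotProduct, Finset.mul_sum, mul_assoc]
  rw [Finset.sum_mul]; congr 1; ext k; ring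

private lemma my_vmv_psd {n : ℕ} (u : Fin n → ℝ) : (vecMulVec u u).PosSemidef := by
  refine .of_dotProduct_mulVec_nonneg ?_ ?_
  · ext i j; simp [vecMulVec_apply, conjTranspose_apply, mul_comm]
  · intro x
    simp [my_vmv_mulVec, dotProduct_smul]
    rw [dotProduct_comm]
    exact mul_self_nonneg _

private lemma my_psd_smul {n : ℕ} {c : ℝ} (hc : 0 ≤ c) {M : Matrix (Fin n) (Fin n) ℝ}
    (hM : M.PosSemidef) : (c • M).PosSemidef := by
  refine .of_dotProduct_mulVec_nonneg ?_ ?_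
  · show (c • M)ᴴ = c • M
    rw [conjTranspose_smul, hM.1, star_trivial]
  · intro x
    have h := hM.dotProduct_mulVec_nonneg x
    simp only [smul_mulVec, dotProduct_smul, smul_eq_mul] at *
    positivity

private lemma my_dp {n : ℕ} (M : Matrix (Fin n) (Fin n) ℝ) (u w : Fin n → ℝ) :
    (M *ᵥ u) ⬝ᵥ w = u ⬝ᵥ (Mᵀ *ᵥ w) := by
  simp [dotProduct, mulVec, dotProduct, Finset.sum_mul, Finset.mul_sum, transpose_apply]
  rw [Finset.sum_comm]
  congr 1; ext i; congr 1; ext j; ring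

theorem key_psd_inequality
    {n : ℕ} (Px : Matrix (Fin n) (Fin n) ℝ)
    (hPsymm : Pxᵀ = Px) (hPidem : Px * Px = Px)
    (v : Fin n → ℝ) (hv : v ⬝ᵥ v ≤ 1)
    (a b : Fin n → ℝ) (ha : a = Px *ᵥ v) (hb : b = (1 - Px) *ᵥ v)
    (α β : ℝ) (hα : α = a ⬝ᵥ a) (hβ : β = b ⬝ᵥ b) (hβpos : 0 < β) :
    (β • (Px + β⁻¹ • ((1 - Px) * vecMulVec v v * (1 - Px))
        - ((1 - vecMulVec v v) * Px * (1 - vecMulVec v v) + vecMulVec v v))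
      - vecMulVec (α • b - β • a) (α • b - β • a)).PosSemidef ∧
    (vecMulVec (α • b - β • a) (α • b - β • a)).PosSemidef := by
  refine ⟨?_, my_vmv_psd _⟩
  -- basic vector facts
  have hPb : Px *ᵥ b = 0 := by
    rw [hb, sub_mulVec, one_mulVec, mulVec_sub, mulVec_mulVec, hPidem, ← ha, sub_self]
  have hvab : v = a + b := by
    rw [ha, hb, sub_mulVec, one_mulVec]; ext i; simp
  have hab : a ⬝ᵥ b = 0 := by
    rw [ha, my_dp, hPsymm, hPb, dotProduct_zero]
  have hba : b ⬝ᵥ a = 0 := by rw [dotProduct_comm]; exact hab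
  have hsum : α + β ≤ 1 := by
    rw [hα, hβ]
    calc a ⬝ᵥ a + b ⬝ᵥ b = v ⬝ᵥ v := by
          rw [hvab, dotProduct_add, add_dotProduct, add_dotProduct, hab, hba]; ring
      _ ≤ 1 := hv
  have hαnn : 0 ≤ α := by rw [hα]; exact Finset.sum_nonneg fun i _ => mul_self_nonneg (a i)
  -- rewrite matrix products
  have hT : (1 - Px)ᵀ = 1 - Px := by rw [transpose_sub, transpose_one, hPsymm]
  have E1 : (1 - Px) * vecMulVec v v * (1 - Px) = vecMulVec b b := by
    rw [my_mul_vmv, my_vmv_mul, hT, ← hb]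
  have E2 : vecMulVec v v * Px = vecMulVec v a := by
    rw [my_vmv_mul, hPsymm, ← ha]
  have E3 : Px * vecMulVec v v = vecMulVec a v := by
    rw [my_mul_vmv, ← ha]
  have E4 : (1 - vecMulVec v v) * Px * (1 - vecMulVec v v)
      = Px - vecMulVec v a - vecMulVec a v + α • vecMulVec v v := by
    have hvv_a : (vecMulVec v v)ᵀ *ᵥ a = α • v := by
      have : (vecMulVec v v)ᵀ = vecMulVec v v := by
        ext i j; simp [vecMulVec_apply, transpose_apply, mul_comm]
      rw [this, my_vmv_mulVec]
      congr 1
      rw [hvab, add_dotProduct, hba, hα, add_zero]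
    have h5 : vecMulVec v a * vecMulVec v v = α • vecMulVec v v := by
      rw [my_vmv_mul, hvv_a]
      ext i j; simp [vecMulVec_apply]; ring
    simp only [sub_mul, mul_sub, one_mul, mul_one, E2, E3, h5]
    abel
  rw [E1, E4]
  -- reduce to a sum of scaled rank-one PSD matrices
  have key : β • (Px + β⁻¹ • vecMulVec b b
        - ((Px - vecMulVec v a - vecMulVec a v + α • vecMulVec v v) + vecMulVec v v))
      - vecMulVec (α • b - β • a) (α • b - β • a)
      = (1 - β - α * (α + β)) • vecMulVec b b + (β * (1 - α - β)) • vecMulVec a a := by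
    rw [hvab]
    ext i j
    have hβne : β ≠ 0 := ne_of_gt hβpos
    simp only [Matrix.smul_apply, Matrix.sub_apply, Matrix.add_apply, vecMulVec_apply, Pi.add_apply,
      Pi.smul_apply, Pi.sub_apply, smul_eq_mul]
    field_simp
    ring
  rw [key]
  have hc1 : 0 ≤ 1 - β - α * (α + β) := by nlinarith
  have hc2 : 0 ≤ β * (1 - α - β) := by nlinarith
  exact (my_psd_smul hc1 (my_vmv_psd b)).add (my_psd_smul hc2 (my_vmv_psd a))
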